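/- Let k ∈ [0,1), λ > 0 and s ≥ 1. If y₁ : [s,∞) → ℝ is twice continuously differentiable with y₁''(t) = λ² t^{−2k} y₁(t) for all t ≥ s, y₁(s) = 0 and y₁'(s) = 1, then y₁(t) ≥ (st)^{k/2} sinh(λ(φ_k(t) − φ_k(s)))/λ for all t ≥ s. -/

import Mathlib

/-!
`z t = (st)^(k/2) sinh (λ (φ_k t - φ_k s)) / λ` is a Liouville–Green approximation of `y₁` with
the same data at `s`, and since `k/2 (k/2 - 1) ≤ 0` it is a subsolution:
`z'' = (λ² t^(-2k) + k/2 (k/2 - 1) / t²) z ≤ λ² t^(-2k) z`. So `v = y₁ - z` satisfies `v'' ≥ q v`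
with `0 ≤ q ≤ λ²` and `v s = v' s = 0`, and such a `v` stays nonnegative: on an interval of length
`δ` with `λ² δ² < 2`, a negative minimum `m` of `v` would give `v'' ≥ λ² m` there and, by Taylor,
`v ≥ λ² δ² m / 2 > m` on it; then `v'' ≥ 0` keeps `v' ≥ 0`, and one steps along `[s, ∞)`.
-/

open MeasureTheory Real Set

noncomputable def phik (k t : ℝ) : ℝ := t ^ (1 - k) / (1 - k)

noncomputable def Ak (k t : ℝ) : ℝ := phik k t - phik k 1

lemma monotoneOn_Icc_of_hasDerivAt_nonneg {f f' : ℝ → ℝ} {a b : ℝ}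
    (hf : ∀ t ∈ Icc a b, HasDerivAt f (f' t) t) (hf' : ∀ t ∈ Icc a b, 0 ≤ f' t) :
    MonotoneOn f (Icc a b) := by
  refine monotoneOn_of_hasDerivWithinAt_nonneg (f' := f') (convex_Icc a b)
    (fun t ht ↦ (hf t ht).continuousAt.continuousWithinAt) (fun t ht ↦ ?_) (fun t ht ↦ ?_)
  all_goals rw [interior_Icc] at ht
  · exact (hf t (Ioo_subset_Icc_self ht)).hasDerivWithinAt
  · exact hf' t (Ioo_subset_Icc_self ht)

lemma taylor_le_of_le_deriv2 {f f' f'' : ℝ → ℝ} {a b c : ℝ}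
    (hf : ∀ t ∈ Icc a b, HasDerivAt f (f' t) t) (hf' : ∀ t ∈ Icc a b, HasDerivAt f' (f'' t) t)
    (hc : ∀ t ∈ Icc a b, c ≤ f'' t) {t : ℝ} (ht : t ∈ Icc a b) :
    f a + f' a * (t - a) + c / 2 * (t - a) ^ 2 ≤ f t := by
  have ha : a ∈ Icc a b := ⟨le_rfl, ht.1.trans ht.2⟩
  have hslope : ∀ u ∈ Icc a b, f' a + c * (u - a) ≤ f' u := by
    have hmono : MonotoneOn (fun u ↦ f' u - c * (u - a)) (Icc a b) :=
      monotoneOn_Icc_of_hasDerivAt_nonneg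
        (fun u hu ↦ (hf' u hu).sub (((hasDerivAt_id u).sub_const a).const_mul c))
        (fun u hu ↦ by simpa using hc u hu)
    intro u hu
    have := hmono ha hu hu.1
    simp only [sub_self, mul_zero, sub_zero] at this
    linarith
  have hmono : MonotoneOn (fun u ↦ f u - f' a * (u - a) - c / 2 * (u - a) ^ 2) (Icc a b) := by
    refine monotoneOn_Icc_of_hasDerivAt_nonneg (f' := fun u ↦ f' u - f' a - c * (u - a))
      (fun u hu ↦ ?_) (fun u hu ↦ by linarith [hslope u hu])
    have hsq := ((hasDerivAt_id' u).sub_const a).pow 2 |>.const_mul (c / 2)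
    exact ((hf u hu).sub (((hasDerivAt_id' u).sub_const a).const_mul (f' a))).sub hsq
      |>.congr_deriv (by push_cast; ring)
  have := hmono ha ht ht.1
  norm_num at this
  linarith

lemma nonneg_on_Icc_of_mul_le_deriv2 {v v' v'' q : ℝ → ℝ} {a b Q : ℝ}
    (hv : ∀ t ∈ Icc a b, HasDerivAt v (v' t) t) (hv' : ∀ t ∈ Icc a b, HasDerivAt v' (v'' t) t)
    (hq : ∀ t ∈ Icc a b, 0 ≤ q t ∧ q t ≤ Q) (hQ : Q * (b - a) ^ 2 < 2)
    (hineq : ∀ t ∈ Icc a b, q t * v t ≤ v'' t) (ha : 0 ≤ v a) (ha' : 0 ≤ v' a) :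
    ∀ t ∈ Icc a b, 0 ≤ v t ∧ 0 ≤ v' t := by
  intro t ht
  have hmem : a ∈ Icc a b := ⟨le_rfl, ht.1.trans ht.2⟩
  obtain ⟨m, hm, hmin⟩ := isCompact_Icc.exists_isMinOn ⟨t, ht⟩
    (fun u hu ↦ (hv u hu).continuousAt.continuousWithinAt)
  have hv_nonneg : ∀ u ∈ Icc a b, 0 ≤ v u := by
    suffices 0 ≤ v m from fun u hu ↦ this.trans (hmin hu)
    by_contra! hneg
    have hc : ∀ u ∈ Icc a b, Q * v m ≤ v'' u := fun u hu ↦ calc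
      Q * v m ≤ q u * v m := mul_le_mul_of_nonpos_right (hq u hu).2 hneg.le
      _ ≤ q u * v u := mul_le_mul_of_nonneg_left (hmin hu) (hq u hu).1
      _ ≤ v'' u := hineq u hu
    have htaylor := taylor_le_of_le_deriv2 hv hv' hc hm
    have hdist : (m - a) ^ 2 ≤ (b - a) ^ 2 :=
      pow_le_pow_left₀ (by linarith [hm.1]) (by linarith [hm.2]) 2
    have hQ0 : 0 ≤ Q := (hq a hmem).1.trans (hq a hmem).2
    nlinarith [mul_nonneg ha' (sub_nonneg.2 hm.1), mul_le_mul_of_nonneg_left hdist hQ0]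
  have hmono : MonotoneOn v' (Icc a b) := monotoneOn_Icc_of_hasDerivAt_nonneg hv'
    fun u hu ↦ (mul_nonneg (hq u hu).1 (hv_nonneg u hu)).trans (hineq u hu)
  exact ⟨hv_nonneg t ht, ha'.trans (hmono hmem ht ht.1)⟩

theorem nonneg_of_mul_le_deriv2 {v v' v'' q : ℝ → ℝ} {s Q : ℝ}
    (hv : ∀ t ∈ Ici s, HasDerivAt v (v' t) t) (hv' : ∀ t ∈ Ici s, HasDerivAt v' (v'' t) t)
    (hq : ∀ t ∈ Ici s, 0 ≤ q t ∧ q t ≤ Q)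
    (hineq : ∀ t ∈ Ici s, q t * v t ≤ v'' t) (hs : 0 ≤ v s) (hs' : 0 ≤ v' s) :
    ∀ t ∈ Ici s, 0 ≤ v t := by
  have hQ0 : 0 ≤ Q := (hq s self_mem_Ici).1.trans (hq s self_mem_Ici).2
  set δ := 1 / (Q + 1) with hδ
  have hδ0 : 0 < δ := by positivity
  have hstep : Q * δ ^ 2 < 2 := by
    rw [hδ, div_pow, one_pow, mul_one_div, div_lt_iff₀ (by positivity)]
    nlinarith
  have hIcc : ∀ {a b}, s ≤ a → Icc a b ⊆ Ici s := fun hsa _ hu ↦ hsa.trans hu.1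
  have key : ∀ n : ℕ, ∀ t ∈ Icc s (s + n * δ), 0 ≤ v t ∧ 0 ≤ v' t := by
    intro n
    induction n with
    | zero =>
      intro t ht
      obtain rfl : t = s := by simpa using ht
      exact ⟨hs, hs'⟩
    | succ n ih =>
      intro t ht
      have hsa : s ≤ s + n * δ := le_add_of_nonneg_right (by positivity)
      rcases le_or_gt t (s + n * δ) with hta | hta
      · exact ih t ⟨ht.1, hta⟩
      obtain ⟨hva, hv'a⟩ := ih _ ⟨hsa, le_rfl⟩
      refine nonneg_on_Icc_of_mul_le_deriv2 (b := s + (n + 1 : ℕ) * δ)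
        (fun u hu ↦ hv u (hIcc hsa hu)) (fun u hu ↦ hv' u (hIcc hsa hu))
        (fun u hu ↦ hq u (hIcc hsa hu)) ?_ (fun u hu ↦ hineq u (hIcc hsa hu)) hva hv'a t
        ⟨hta.le, ht.2⟩
      rwa [show s + (n + 1 : ℕ) * δ - (s + n * δ) = δ by push_cast; ring]
  intro t ht
  obtain ⟨n, hn⟩ := exists_nat_ge ((t - s) / δ)
  refine (key n t ⟨ht, ?_⟩).1
  linarith [(div_le_iff₀ hδ0).1 hn]

lemma hasDerivAt_phik {k t : ℝ} (hk : k ≠ 1) (ht : 0 < t) :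
    HasDerivAt (phik k) (t ^ (-k)) t := by
  have h1k : 1 - k ≠ 0 := sub_ne_zero.2 hk.symm
  refine ((hasDerivAt_rpow_const (p := 1 - k) (Or.inl ht.ne')).div_const (1 - k)).congr_deriv ?_
  rw [sub_sub_cancel_left, mul_div_cancel_left₀ _ h1k]

lemma monotoneOn_phik {k : ℝ} (hk : k < 1) : MonotoneOn (phik k) (Ici 0) :=
  fun _ hs _ _ hst ↦ div_le_div_of_nonneg_right (rpow_le_rpow hs hst (by linarith)) (by linarith)

/-- The Liouville–Green approximant `q^(-1/4) sinh (λ ∫ √q)` for `q t = λ² t^(-2k)`. -/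
noncomputable def wkbSinh (k lam c t : ℝ) : ℝ := t ^ (k / 2) * sinh (lam * (phik k t - c))

noncomputable def wkbSinhDeriv (k lam c t : ℝ) : ℝ :=
  k / 2 * t ^ (k / 2 - 1) * sinh (lam * (phik k t - c))
    + lam * t ^ (-(k / 2)) * cosh (lam * (phik k t - c))

@[simp]
lemma wkbSinh_phik_self (k lam t : ℝ) : wkbSinh k lam (phik k t) t = 0 := by
  simp [wkbSinh]

@[simp]
lemma wkbSinhDeriv_phik_self (k lam t : ℝ) :
    wkbSinhDeriv k lam (phik k t) t = lam * t ^ (-(k / 2)) := by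
  simp [wkbSinhDeriv]

section
variable {k lam c t : ℝ}

lemma hasDerivAt_sinh_phik (hk : k ≠ 1) (ht : 0 < t) :
    HasDerivAt (fun τ ↦ sinh (lam * (phik k τ - c)))
      (cosh (lam * (phik k t - c)) * (lam * t ^ (-k))) t :=
  (((hasDerivAt_phik hk ht).sub_const c).const_mul lam).sinh

lemma hasDerivAt_cosh_phik (hk : k ≠ 1) (ht : 0 < t) :
    HasDerivAt (fun τ ↦ cosh (lam * (phik k τ - c)))
      (sinh (lam * (phik k t - c)) * (lam * t ^ (-k))) t :=
  (((hasDerivAt_phik hk ht).sub_const c).const_mul lam).cosh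

lemma hasDerivAt_wkbSinh (hk : k ≠ 1) (ht : 0 < t) :
    HasDerivAt (wkbSinh k lam c) (wkbSinhDeriv k lam c t) t := by
  refine ((hasDerivAt_rpow_const (p := k / 2) (Or.inl ht.ne')).mul
    (hasDerivAt_sinh_phik hk ht)).congr_deriv ?_
  have h : t ^ (k / 2) * t ^ (-k) = t ^ (-(k / 2)) := by rw [← rpow_add ht]; ring_nf
  rw [wkbSinhDeriv]
  linear_combination lam * cosh (lam * (phik k t - c)) * h

lemma hasDerivAt_wkbSinhDeriv (hk : k ≠ 1) (ht : 0 < t) :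
    HasDerivAt (wkbSinhDeriv k lam c)
      ((lam ^ 2 * t ^ (-(2 * k)) + k / 2 * (k / 2 - 1) / t ^ 2) * wkbSinh k lam c t) t := by
  refine ((((hasDerivAt_rpow_const (p := k / 2 - 1) (Or.inl ht.ne')).const_mul (k / 2)).mul
    (hasDerivAt_sinh_phik hk ht)).add
    (((hasDerivAt_rpow_const (p := -(k / 2)) (Or.inl ht.ne')).const_mul lam).mul
    (hasDerivAt_cosh_phik hk ht))).congr_deriv ?_
  have h₁ : t ^ (k / 2 - 1) * t ^ (-k) = t ^ (-(k / 2) - 1) := by rw [← rpow_add ht]; ring_nf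
  have h₂ : t ^ (-(k / 2)) * t ^ (-k) = t ^ (-(2 * k)) * t ^ (k / 2) := by
    rw [← rpow_add ht, ← rpow_add ht]; ring_nf
  have h₃ : t ^ (k / 2 - 1 - 1) = t ^ (k / 2) / t ^ 2 := by
    rw [rpow_sub ht, rpow_sub ht, rpow_one]; field_simp
  rw [wkbSinh, h₃]
  linear_combination lam * (k / 2) * cosh (lam * (phik k t - c)) * h₁
    + lam ^ 2 * sinh (lam * (phik k t - c)) * h₂

end

lemma wkbSinh_nonneg {k lam s t : ℝ} (hk : k < 1) (hlam : 0 ≤ lam) (hs : 0 ≤ s) (hst : s ≤ t) :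
    0 ≤ wkbSinh k lam (phik k s) t :=
  mul_nonneg (rpow_nonneg (hs.trans hst) _) <| sinh_nonneg_iff.2 <|
    mul_nonneg hlam (sub_nonneg.2 (monotoneOn_phik hk hs (hs.trans hst) hst))

theorem y1_lower_bound_general
    (k : ℝ) (hk : k ∈ Set.Ico (0:ℝ) 1) (lam : ℝ) (hlam : 0 < lam)
    (s : ℝ) (hs : 1 ≤ s)
    (y₁ : ℝ → ℝ)
    (hyd : ∀ t : ℝ, s ≤ t → DifferentiableAt ℝ y₁ t)
    (hyd2 : ∀ t : ℝ, s ≤ t → DifferentiableAt ℝ (deriv y₁) t)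
    (hode : ∀ t : ℝ, s ≤ t → deriv (deriv y₁) t = lam^2 * t ^ (-(2*k)) * y₁ t)
    (hy0 : y₁ s = 0) (hy0' : deriv y₁ s = 1) :
    ∀ t : ℝ, s ≤ t →
      (s*t) ^ (k/2) * Real.sinh (lam * (phik k t - phik k s)) / lam ≤ y₁ t := by
  obtain ⟨hk0, hk1⟩ := hk
  have hs0 : 0 < s := one_pos.trans_le hs
  have hpos : ∀ t ∈ Ici s, 0 < t := fun t ht ↦ hs0.trans_le ht
  set C := s ^ (k / 2) / lam with hCdef
  have hC : 0 ≤ C := by positivity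
  have hCs : C * (lam * s ^ (-(k / 2))) = 1 := by
    rw [hCdef, rpow_neg hs0.le]; field_simp
  have hcorr : ∀ t ∈ Ici s, k / 2 * (k / 2 - 1) / t ^ 2 * wkbSinh k lam (phik k s) t ≤ 0 :=
    fun t ht ↦ mul_nonpos_of_nonpos_of_nonneg
      (div_nonpos_of_nonpos_of_nonneg (by nlinarith) (sq_nonneg t))
      (wkbSinh_nonneg hk1 hlam.le hs0.le ht)
  have hv := nonneg_of_mul_le_deriv2 (s := s) (Q := lam ^ 2) (q := fun t ↦ lam ^ 2 * t ^ (-(2 * k)))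
    (v := fun t ↦ y₁ t - C * wkbSinh k lam (phik k s) t)
    (fun t ht ↦ (hyd t ht).hasDerivAt.sub
      ((hasDerivAt_wkbSinh hk1.ne (hpos t ht)).const_mul C))
    (fun t ht ↦ (hyd2 t ht).hasDerivAt.sub
      ((hasDerivAt_wkbSinhDeriv hk1.ne (hpos t ht)).const_mul C))
    (fun t ht ↦ ⟨by have := hpos t ht; positivity, mul_le_of_le_one_right (sq_nonneg lam)
      (rpow_le_one_of_one_le_of_nonpos (hs.trans ht) (by linarith))⟩)
    (fun t ht ↦ by
      rw [hode t ht]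
      linear_combination mul_nonpos_of_nonneg_of_nonpos hC (hcorr t ht))
    (by simp [hy0]) (by simp [hy0', hCs])
  intro t ht
  have hz : (s * t) ^ (k / 2) * sinh (lam * (phik k t - phik k s)) / lam
      = C * wkbSinh k lam (phik k s) t := by
    rw [mul_rpow hs0.le (hpos t ht).le, wkbSinh]; ring
  linarith [hv t ht]

/-- Lower bound for the solution `y₁` of `y'' = λ² t^(-2k) y`, `y(s) = 0`, `y'(s) = 1`. -/
theorem y1_lower_bound
    (k : ℝ) (hk : k ∈ Set.Ico (0:ℝ) 1) (lam : ℝ) (hlam : 0 < lam)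
    (s : ℝ) (hs : 1 ≤ s)
    (y₁ : ℝ → ℝ)
    (hyd : ∀ t : ℝ, s ≤ t → DifferentiableAt ℝ y₁ t)
    (hyd2 : ∀ t : ℝ, s ≤ t → DifferentiableAt ℝ (deriv y₁) t)
    (hyc2 : ContinuousOn (deriv (deriv y₁)) (Set.Ici s))
    (hode : ∀ t : ℝ, s ≤ t → deriv (deriv y₁) t = lam^2 * t ^ (-(2*k)) * y₁ t)
    (hy0 : y₁ s = 0) (hy0' : deriv y₁ s = 1) :
    ∀ t : ℝ, s ≤ t →
      (s*t) ^ (k/2) * Real.sinh (lam * (phik k t - phik k s)) / lam ≤ y₁ t :=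
  y1_lower_bound_general k hk lam hlam s hs y₁ hyd hyd2 hode hy0 hy0'
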